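/- Let n ≥ 2 be an integer, m > 0 a real number, a ∈ ℝ, and set η = √((n−1)/m). Then the function f : {(x,t) ∈ ℝⁿ × ℝ : xₙ > 0} → ℝ defined by f(x,t) = −m·ln(cosh(η·t + a)) satisfies the quasi-Einstein PDE system for (f, m, λ) with λ = −(n−1). (In particular, (ℍⁿ × ℝ, g, ∇f, −(n−1)) is a quasi-Einstein metric with ∇f = −m·η·tanh(η·t + a)·∂ₜ.) -/

import Mathlib

/-!
The potential depends on `t` alone, so every derivative involving an `xᵢ` vanishes and equations
(1), (2), (4), (5), (6) reduce to `λ + (n - 1) = 0`. Equation (3) becomes the ODE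
`ψ'' = ψ'²/m + λ` for `ψ(t) = -m log cosh(ηt + a)`: since `ψ' = -mη tanh(ηt + a)` and
`tanh' = 1 - tanh²`, one gets `ψ'' - ψ'²/m = -mη²`, which equals `λ = -(n - 1)` exactly when
`η² = (n - 1)/m`.
-/

open Real

/-- The index of the last coordinate `xₙ` in `Fin n`. -/
def lastIdx (n : ℕ) (hn : 2 ≤ n) : Fin n := ⟨n - 1, by omega⟩

/-- Partial derivative of `f` in the `i`-th space coordinate at the point `p = (x, t)`. -/
noncomputable def partialX (n : ℕ) (f : (Fin n → ℝ) × ℝ → ℝ) (i : Fin n)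
    (p : (Fin n → ℝ) × ℝ) : ℝ :=
  deriv (fun s => f (Function.update p.1 i s, p.2)) (p.1 i)

/-- Partial derivative of `f` in the `t` coordinate at the point `p = (x, t)`. -/
noncomputable def partialT (n : ℕ) (f : (Fin n → ℝ) × ℝ → ℝ)
    (p : (Fin n → ℝ) × ℝ) : ℝ :=
  deriv (fun s => f (p.1, s)) p.2

/-- The quasi-Einstein PDE system for `(f, m, λ)` on the half-space model
`{(x,t) ∈ ℝⁿ × ℝ : xₙ > 0}` of `ℍⁿ × ℝ` with metric `g = xₙ⁻²·Σᵢ dxᵢ² + dt²`. -/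
def QESystem (n : ℕ) (hn : 2 ≤ n) (m lam : ℝ) (f : (Fin n → ℝ) × ℝ → ℝ) : Prop :=
  ∀ p : (Fin n → ℝ) × ℝ, 0 < p.1 (lastIdx n hn) →
    -- (1)  xₙ²·∂²f/∂xᵢ² − xₙ·∂f/∂xₙ = (xₙ²/m)·(∂f/∂xᵢ)² + λ + (n−1),  i < n
    (∀ i : Fin n, (i : ℕ) < n - 1 →
      (p.1 (lastIdx n hn)) ^ 2 * partialX n (partialX n f i) i p
        - p.1 (lastIdx n hn) * partialX n f (lastIdx n hn) p
      = (p.1 (lastIdx n hn)) ^ 2 / m * (partialX n f i p) ^ 2 + lam + ((n : ℝ) - 1)) ∧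
    -- (2)  xₙ·∂f/∂xₙ + xₙ²·∂²f/∂xₙ² = (xₙ²/m)·(∂f/∂xₙ)² + λ + (n−1)
    (p.1 (lastIdx n hn) * partialX n f (lastIdx n hn) p
        + (p.1 (lastIdx n hn)) ^ 2 * partialX n (partialX n f (lastIdx n hn)) (lastIdx n hn) p
      = (p.1 (lastIdx n hn)) ^ 2 / m * (partialX n f (lastIdx n hn) p) ^ 2
        + lam + ((n : ℝ) - 1)) ∧
    -- (3)  ∂²f/∂t² = (1/m)·(∂f/∂t)² + λ
    (partialT n (partialT n f) p = (1 / m) * (partialT n f p) ^ 2 + lam) ∧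
    -- (4)  ∂²f/∂xᵢ∂xⱼ = (1/m)·(∂f/∂xᵢ)·(∂f/∂xⱼ),  i < j < n
    (∀ i j : Fin n, (i : ℕ) < (j : ℕ) → (j : ℕ) < n - 1 →
      partialX n (partialX n f j) i p = (1 / m) * partialX n f i p * partialX n f j p) ∧
    -- (5)  xₙ²·∂²f/∂xᵢ∂xₙ + xₙ·∂f/∂xᵢ = (xₙ²/m)·(∂f/∂xᵢ)·(∂f/∂xₙ),  i < n
    (∀ i : Fin n, (i : ℕ) < n - 1 →
      (p.1 (lastIdx n hn)) ^ 2 * partialX n (partialX n f (lastIdx n hn)) i p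
          + p.1 (lastIdx n hn) * partialX n f i p
        = (p.1 (lastIdx n hn)) ^ 2 / m * partialX n f i p * partialX n f (lastIdx n hn) p) ∧
    -- (6)  ∂²f/∂xᵢ∂t = (1/m)·(∂f/∂xᵢ)·(∂f/∂t),  i ≤ n
    (∀ i : Fin n,
      partialX n (partialT n f) i p = (1 / m) * partialX n f i p * partialT n f p)

namespace Real

theorem hasDerivAt_tanh (x : ℝ) : HasDerivAt tanh (1 - tanh x ^ 2) x := by
  have hcosh : cosh x ≠ 0 := (cosh_pos x).ne'
  have hquot := (hasDerivAt_sinh x).div (hasDerivAt_cosh x) hcosh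
  rw [show sinh / cosh = tanh from funext fun y => (tanh_eq_sinh_div_cosh y).symm] at hquot
  refine hquot.congr_deriv ?_
  rw [tanh_eq_sinh_div_cosh]
  field_simp

theorem hasDerivAt_log_cosh (x : ℝ) : HasDerivAt (fun y => log (cosh y)) (tanh x) x := by
  simpa [tanh_eq_sinh_div_cosh] using (hasDerivAt_cosh x).log (cosh_pos x).ne'

end Real

theorem deriv_neg_mul_log_cosh_affine (m η a : ℝ) :
    deriv (fun t => -m * log (cosh (η * t + a))) = fun t => -(m * η) * tanh (η * t + a) := by
  funext t
  have hu := (hasDerivAt_const_mul η).add_const a (x := t)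
  refine (((hasDerivAt_log_cosh _).comp t hu).const_mul (-m)).deriv.trans ?_
  ring

theorem deriv_mul_tanh_affine (c η a t : ℝ) :
    deriv (fun t => c * tanh (η * t + a)) t = c * η * (1 - tanh (η * t + a) ^ 2) := by
  have hu := (hasDerivAt_const_mul η).add_const a (x := t)
  refine (((hasDerivAt_tanh _).comp t hu).const_mul c).deriv.trans ?_
  ring

theorem neg_mul_log_cosh_affine_ode {m : ℝ} (hm : m ≠ 0) (η a t : ℝ) :
    deriv (deriv fun t => -m * log (cosh (η * t + a))) t
      = 1 / m * deriv (fun t => -m * log (cosh (η * t + a))) t ^ 2 - m * η ^ 2 := by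
  rw [deriv_neg_mul_log_cosh_affine, deriv_mul_tanh_affine]
  field_simp
  ring

theorem partialX_comp_snd (n : ℕ) (ψ : ℝ → ℝ) (i : Fin n) :
    partialX n (fun q => ψ q.2) i = 0 := by
  funext p
  simp [partialX]

theorem partialX_zero (n : ℕ) (i : Fin n) : partialX n 0 i = 0 :=
  partialX_comp_snd n 0 i

theorem partialT_comp_snd (n : ℕ) (ψ : ℝ → ℝ) :
    partialT n (fun q => ψ q.2) = fun q => deriv ψ q.2 :=
  rfl

theorem qESystem_comp_snd_of_ode (n : ℕ) (hn : 2 ≤ n) {m : ℝ} {ψ : ℝ → ℝ}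
    (hψ : ∀ t, deriv (deriv ψ) t = 1 / m * deriv ψ t ^ 2 - ((n : ℝ) - 1)) :
    QESystem n hn m (-((n : ℝ) - 1)) (fun q => ψ q.2) := by
  intro p _
  simp only [partialT_comp_snd, partialX_comp_snd, partialX_zero, Pi.zero_apply, hψ]
  refine ⟨fun _ _ => ?_, ?_, ?_, fun _ _ _ _ => ?_, fun _ _ => ?_, fun _ => ?_⟩ <;> ring

/-- **Example 2.** With `η = √((n−1)/m)`, the function `f(x,t) = −m·ln(cosh(η·t + a))`
satisfies the quasi-Einstein PDE system on `ℍⁿ × ℝ` with `λ = −(n−1)`. -/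
theorem log_cosh_potential_is_quasiEinstein
    (n : ℕ) (hn : 2 ≤ n) (m : ℝ) (hm : 0 < m) (a : ℝ)
    (η : ℝ) (hη : η = Real.sqrt (((n : ℝ) - 1) / m)) :
    QESystem n hn m (-((n : ℝ) - 1))
      (fun p : (Fin n → ℝ) × ℝ => -m * Real.log (Real.cosh (η * p.2 + a))) := by
  have hmη : m * η ^ 2 = (n : ℝ) - 1 := by
    have hn1 : (0 : ℝ) ≤ ((n : ℝ) - 1) / m :=
      div_nonneg (by norm_num; omega) hm.le
    rw [hη, sq_sqrt hn1]
    field_simp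
  refine qESystem_comp_snd_of_ode n hn (ψ := fun t => -m * log (cosh (η * t + a))) fun t => ?_
  rw [← hmη]
  exact neg_mul_log_cosh_affine_ode hm.ne' η a t
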